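/- arXiv:0902.4299 — 4 statements merged into one kernel-verified Lean document; each statement's English description precedes it below -/
import Mathlib

section
/- Let W ⊂ ℝ² be a neighborhood of 0, h₁ ∈ C¹(cl W) with h₁ > 0 on cl W, α > 1, and h₀(x₁,x₂) = |x₁|^α h₁(x₁,x₂) on W. Then there exist δ > 0, β₀ > 0, c₂ > 0 such that for all 0 < β ≤ β₀ and all (x₁,x₂) in the rectangle (−2β^{1/α}, −β^{1/α}) × (−δ, δ), one has ∂h₀/∂x₁(x₁,x₂) ≤ −c₂ β^{1 − 1/α}. -/
/-!
For `x₁ < 0` we have `∂₁h₀ = -α (-x₁)^(α-1) h₁ + (-x₁)^α ∂₁h₁`. On a closed ball inside `W`,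
`h₁ ≥ m > 0` and `‖Dh₁‖ ≤ M`, so once `-x₁ ≤ α m / (2 M)` the second term is at most half the
size of the first, and `∂₁h₀ ≤ -(α m / 2) (-x₁)^(α-1)`. On the window `-x₁ > β^(1/α)`, which
lies in that range for small `β`, this is at most `-(α m / 2) β^(1 - 1/α)`.
-/

open Real Set Filter Topology Metric

lemma deriv_neg_rpow_mul_le {f g : ℝ → ℝ} {g' α m M x : ℝ} (hα : 0 < α) (hx : x < 0)
    (hfg : f =ᶠ[𝓝 x] fun t => (-t) ^ α * g t) (hg : HasDerivAt g g' x)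
    (hm : m ≤ g x) (hM : g' ≤ M) (hxM : -x * M ≤ α * m / 2) :
    deriv f x ≤ -(α * m / 2) * (-x) ^ (α - 1) := by
  have hpow : HasDerivAt (fun t => (-t) ^ α) (-1 * α * (-x) ^ (α - 1)) x :=
    (hasDerivAt_neg x).rpow_const (Or.inl (neg_ne_zero.2 hx.ne))
  have hprod : HasDerivAt (fun t => (-t) ^ α * g t)
      (-1 * α * (-x) ^ (α - 1) * g x + (-x) ^ α * g') x := hpow.mul hg
  rw [hfg.deriv_eq, hprod.deriv]
  have hs : 0 < -x := neg_pos.2 hx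
  have hA : 0 < (-x) ^ (α - 1) := rpow_pos_of_pos hs _
  have hsα : (-x) ^ α = (-x) ^ (α - 1) * -x := by
    rw [rpow_sub_one hs.ne', div_mul_cancel₀ _ hs.ne']
  rw [hsα]
  nlinarith [mul_nonneg (mul_nonneg hα.le hA.le) (sub_nonneg.2 hm),
    mul_nonneg (mul_nonneg hA.le hs.le) (sub_nonneg.2 hM),
    mul_nonneg hA.le (sub_nonneg.2 hxM)]

lemma hasDerivAt_comp_prodMk_const {F : Type*} [NormedAddCommGroup F]
    [NormedSpace ℝ F] {f : ℝ × ℝ → F} {x₁ x₂ : ℝ} (hf : DifferentiableAt ℝ f (x₁, x₂)) :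
    HasDerivAt (fun t => f (t, x₂)) (fderiv ℝ f (x₁, x₂) (1, 0)) x₁ :=
  hf.hasFDerivAt.comp_hasDerivAt x₁ ((hasDerivAt_id x₁).prodMk (hasDerivAt_const x₁ x₂))

lemma ContinuousLinearMap.apply_one_zero_le_opNorm (L : ℝ × ℝ →L[ℝ] ℝ) : L (1, 0) ≤ ‖L‖ :=
  (le_abs_self _).trans ((L.le_opNorm (1, 0)).trans_eq (by simp))

lemma eventuallyEq_slice_neg_rpow_mul {W : Set (ℝ × ℝ)} (hWo : IsOpen W)
    {h₀ h₁ : ℝ × ℝ → ℝ} {α x₁ x₂ : ℝ} (hh₀ : ∀ x ∈ W, h₀ x = |x.1| ^ α * h₁ x)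
    (hx : (x₁, x₂) ∈ W) (hx₁ : x₁ < 0) :
    (fun t => h₀ (t, x₂)) =ᶠ[𝓝 x₁] fun t => (-t) ^ α * h₁ (t, x₂) := by
  have hW : ∀ᶠ t in 𝓝 x₁, (t, x₂) ∈ W :=
    (continuous_id.prodMk continuous_const).continuousAt.preimage_mem_nhds (hWo.mem_nhds hx)
  filter_upwards [hW, Iio_mem_nhds hx₁] with t ht ht₀
  rw [hh₀ _ ht, abs_of_neg ht₀]

lemma deriv_slice_le_of_eq_abs_rpow_mul {W : Set (ℝ × ℝ)} (hWo : IsOpen W)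
    {h₀ h₁ : ℝ × ℝ → ℝ} {α m M x₁ x₂ : ℝ} (hα : 0 < α)
    (hh₀ : ∀ x ∈ W, h₀ x = |x.1| ^ α * h₁ x) (hx : (x₁, x₂) ∈ W) (hx₁ : x₁ < 0)
    (hh₁ : DifferentiableAt ℝ h₁ (x₁, x₂)) (hm : m ≤ h₁ (x₁, x₂))
    (hM : ‖fderiv ℝ h₁ (x₁, x₂)‖ ≤ M) (hxM : -x₁ * M ≤ α * m / 2) :
    deriv (fun t => h₀ (t, x₂)) x₁ ≤ -(α * m / 2) * (-x₁) ^ (α - 1) :=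
  deriv_neg_rpow_mul_le hα hx₁ (eventuallyEq_slice_neg_rpow_mul hWo hh₀ hx hx₁)
    (hasDerivAt_comp_prodMk_const hh₁) hm
    ((fderiv ℝ h₁ (x₁, x₂)).apply_one_zero_le_opNorm.trans hM) hxM

lemma rpow_inv_lt_neg_and_neg_lt_of_mem_Ioo {α β ε x : ℝ} (hα : 0 < α) (hβ : 0 ≤ β)
    (hε : 0 ≤ ε) (hβε : β ≤ (ε / 2) ^ α)
    (hx : x ∈ Ioo (-2 * β ^ (1 / α)) (-(β ^ (1 / α)))) :
    β ^ (1 / α) < -x ∧ -x < ε := by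
  have hβ_root : β ^ (1 / α) ≤ ε / 2 :=
    calc β ^ (1 / α) ≤ ((ε / 2) ^ α) ^ (1 / α) := rpow_le_rpow hβ hβε (by positivity)
      _ = ε / 2 := by rw [one_div, rpow_rpow_inv (by positivity) hα.ne']
  constructor <;> linarith [hx.1, hx.2, hβ_root]

lemma rpow_one_sub_inv_le_rpow_sub_one {α β s : ℝ} (hα : 1 ≤ α) (hβ : 0 ≤ β)
    (hβs : β ^ (1 / α) ≤ s) : β ^ (1 - 1 / α) ≤ s ^ (α - 1) := by
  have hα₀ : α ≠ 0 := by positivity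
  calc β ^ (1 - 1 / α) = (β ^ (1 / α)) ^ (α - 1) := by
        rw [← rpow_mul hβ]; congr 1; field_simp
    _ ≤ s ^ (α - 1) := rpow_le_rpow (by positivity) hβs (by linarith)

theorem stmt5
    (W : Set (ℝ × ℝ)) (hWo : IsOpen W) (hW0 : (0, 0) ∈ W)
    (h₁ h₀ : ℝ × ℝ → ℝ) (hh₁ : ContDiff ℝ 1 h₁)
    (hh₁pos : ∀ x ∈ closure W, 0 < h₁ x)
    (α : ℝ) (hα : 1 < α)
    (hh₀ : ∀ x ∈ W, h₀ x = |x.1| ^ α * h₁ x) :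
    ∃ δ > (0 : ℝ), ∃ β₀ > (0 : ℝ), ∃ c₂ > (0 : ℝ),
      ∀ β : ℝ, 0 < β → β ≤ β₀ →
        ∀ x₁ x₂ : ℝ, x₁ ∈ Ioo (-2 * β ^ (1 / α)) (-(β ^ (1 / α))) →
          x₂ ∈ Ioo (-δ) δ →
          (x₁, x₂) ∈ W ∧
          deriv (fun t => h₀ (t, x₂)) x₁ ≤ -c₂ * β ^ (1 - 1 / α) := by
  have hα₀ : 0 < α := by linarith
  obtain ⟨r, hr, hrW⟩ := nhds_basis_closedBall.mem_iff.1 (hWo.mem_nhds hW0)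
  have hK := isCompact_closedBall ((0, 0) : ℝ × ℝ) r
  obtain ⟨m, hm, hmK⟩ := hK.exists_forall_le' hh₁.continuous.continuousOn
    fun p hp => hh₁pos p (subset_closure (hrW hp))
  obtain ⟨M, hM, hMK⟩ := (hK.image_of_continuousOn
    (hh₁.continuous_fderiv one_ne_zero).continuousOn).isBounded.exists_pos_norm_le
  set ε := min r (α * m / (2 * M))
  have hε : 0 < ε := lt_min hr (by positivity)
  refine ⟨r, hr, (ε / 2) ^ α, by positivity, α * m / 2, by positivity, ?_⟩
  intro β hβ hβ₀ x₁ x₂ hx₁ hx₂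
  obtain ⟨hβx, hxε⟩ := rpow_inv_lt_neg_and_neg_lt_of_mem_Ioo hα₀ hβ.le hε.le hβ₀ hx₁
  have hx₁₀ : x₁ < 0 := by linarith [rpow_nonneg hβ.le (1 / α)]
  have hxK : (x₁, x₂) ∈ closedBall ((0, 0) : ℝ × ℝ) r := by
    rw [mem_closedBall, Prod.dist_eq, dist_0_eq_abs, dist_0_eq_abs, abs_of_neg hx₁₀]
    exact max_le (hxε.le.trans (min_le_left _ _)) (abs_lt.2 hx₂).le
  have hxM : -x₁ * M ≤ α * m / 2 :=
    calc -x₁ * M ≤ α * m / (2 * M) * M := by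
          gcongr; exact hxε.le.trans (min_le_right _ _)
      _ = α * m / 2 := by field_simp
  refine ⟨hrW hxK, ?_⟩
  calc deriv (fun t => h₀ (t, x₂)) x₁ ≤ -(α * m / 2) * (-x₁) ^ (α - 1) :=
        deriv_slice_le_of_eq_abs_rpow_mul hWo hα₀ hh₀ (hrW hxK) hx₁₀
          (hh₁.differentiable one_ne_zero _) (hmK _ hxK) (hMK _ (mem_image_of_mem _ hxK)) hxM
    _ ≤ -(α * m / 2) * β ^ (1 - 1 / α) :=
        mul_le_mul_of_nonpos_left (rpow_one_sub_inv_le_rpow_sub_one hα.le hβ.le hβx.le)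
          (by linarith [mul_pos hα₀ hm])
end

section
/- Let F, c₁ > 0, V₁ ≥ 0, and let η ∈ C²([0,T)), η > 0, solve η'' = G(η,η') with η(0) = η₀, η'(0) = η₁, where G satisfies: (a) G(β,γ) ≤ c₁/β³ − F for all β > 0, γ ≥ 0; (b) G(β,γ) = −F for γ ≥ V₁; (c) G(β,γ) ≥ −F always. Set V₂ = max{η₁+1, V₁}, D₁ = (c₁/F)^{1/3}, and D₂ = 2·max{η₀, D₁, (½η₁² + Fη₀ + c₁/(2η₀²))/F, (½V₂² + FD₁ + c₁/(2D₁²))/F}. Then η(t) < D₂ for all t ∈ [0,T). -/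
/-!
While the velocity is at least `V₁` the acceleration is `-F < 0`, so `η'` can never climb from
`η₁` up to `V₂`. While `η' ≥ 0`, hypothesis (a) makes the energy
`E = ½ η'² + F η + c₁ / (2 η²)` non-increasing, and `F η ≤ E`. At the first time `η` reaches
`D₂` it is moving upwards. Either it has moved upwards since time `0`, and then its energy is at
most `E(0)`, or it turned around at some earlier time `s`; there `η'(s) ≥ 0` and `η''(s) ≥ 0`, so (a)
forces `η(s) ≤ D₁`, and the energy is at most that of the last passage through `D₁`, which is
bounded by `½ V₂² + F D₁ + c₁ / (2 D₁²)`. Both bounds contradict `F D₂ ≤ E`.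
-/

open Set Filter Topology

lemma HasDerivAt.nonneg_of_left_le {f : ℝ → ℝ} {f' x : ℝ} {s : Set ℝ} (hf : HasDerivAt f f' x)
    (hx : x ∈ closure s) (hs : ∀ y ∈ s, y < x ∧ f y ≤ f x) : 0 ≤ f' := by
  have hxs : x ∉ s := fun h => (hs x h).1.false
  have hslope := hasDerivWithinAt_iff_tendsto_slope.mp (hf.hasDerivWithinAt (s := s))
  rw [sdiff_singleton_eq_self hxs] at hslope
  have : (𝓝[s] x).NeBot := mem_closure_iff_nhdsWithin_neBot.mp hx
  refine ge_of_tendsto hslope (eventually_nhdsWithin_of_forall fun y hy => ?_)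
  rw [slope_def_field]
  exact div_nonneg_of_nonpos (by linarith [(hs y hy).2]) (by linarith [(hs y hy).1])

lemma exists_first_ge {f : ℝ → ℝ} {a b c : ℝ} (hab : a ≤ b) (hf : ContinuousOn f (Icc a b))
    (ha : f a < c) (hb : c ≤ f b) : ∃ s ∈ Ioc a b, c ≤ f s ∧ ∀ u ∈ Ico a s, f u < c := by
  set S := Icc a b ∩ f ⁻¹' Ici c
  have hS : IsClosed S := hf.preimage_isClosed_of_isClosed isClosed_Icc isClosed_Ici
  have hSne : S.Nonempty := ⟨b, ⟨hab, le_rfl⟩, hb⟩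
  have hSbdd : BddBelow S := ⟨a, fun u hu => hu.1.1⟩
  obtain ⟨⟨has, hsb⟩, hcs⟩ := hS.csInf_mem hSne hSbdd
  refine ⟨sInf S, ⟨has.lt_of_ne ?_, hsb⟩, hcs, fun u hu => ?_⟩
  · intro has
    exact ((has ▸ hcs).trans_lt ha).false
  · by_contra! hcu
    exact (csInf_le hSbdd ⟨⟨hu.1, hu.2.le.trans hsb⟩, hcu⟩).not_gt hu.2

lemma exists_ge_and_deriv_nonneg {f f' : ℝ → ℝ} {a b c : ℝ} (hab : a ≤ b)
    (hf : ∀ t ∈ Icc a b, HasDerivAt f (f' t) t) (ha : f a < c) (hb : c ≤ f b) :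
    ∃ s ∈ Ioc a b, c ≤ f s ∧ 0 ≤ f' s := by
  obtain ⟨s, hs, hcs, hbefore⟩ := exists_first_ge hab (HasDerivAt.continuousOn hf) ha hb
  refine ⟨s, hs, hcs, (hf s (Ioc_subset_Icc_self hs)).nonneg_of_left_le (s := Ico a s) ?_ ?_⟩
  · rw [closure_Ico hs.1.ne]
    exact right_mem_Icc.mpr hs.1.le
  · exact fun y hy => ⟨hy.2, (hbefore y hy).le.trans hcs⟩

/-- The last time `s` at which `f` is negative, or a limit of such times. -/
lemma exists_deriv_nonneg_and_nonneg_after {f f' : ℝ → ℝ} {a b : ℝ}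
    (hf : ∀ t ∈ Icc a b, HasDerivAt f (f' t) t) (hb : 0 ≤ f b) (hneg : ∃ w ∈ Icc a b, f w < 0) :
    ∃ s ∈ Icc a b, 0 ≤ f' s ∧ ∀ u ∈ Icc s b, 0 ≤ f u := by
  obtain ⟨w, hw, hfw⟩ := hneg
  set O := {u ∈ Icc a b | f u < 0}
  have hOne : O.Nonempty := ⟨w, hw, hfw⟩
  have hObdd : BddAbove O := ⟨b, fun u hu => hu.1.2⟩
  set s := sSup O
  have hs : s ∈ Icc a b := ⟨hw.1.trans (le_csSup hObdd ⟨hw, hfw⟩), csSup_le hOne fun u hu => hu.1.2⟩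
  have hafter : ∀ u ∈ Ioc s b, 0 ≤ f u := fun u hu => by
    by_contra! hfu
    exact (le_csSup hObdd ⟨⟨hs.1.trans hu.1.le, hu.2⟩, hfu⟩).not_gt hu.1
  have hnonneg : ∀ u ∈ Icc s b, 0 ≤ f u := by
    rcases hs.2.eq_or_lt with hsb | hsb
    · intro u hu
      rwa [show u = b by linarith [hu.1, hu.2]]
    · have hK : IsClosed (Icc a b ∩ f ⁻¹' Ici 0) :=
        (HasDerivAt.continuousOn hf).preimage_isClosed_of_isClosed isClosed_Icc isClosed_Ici
      have hsub : closure (Ioc s b) ⊆ Icc a b ∩ f ⁻¹' Ici 0 :=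
        closure_minimal (fun u hu => ⟨⟨hs.1.trans hu.1.le, hu.2⟩, hafter u hu⟩) hK
      rw [closure_Ioc hsb.ne] at hsub
      exact fun u hu => (hsub hu).2
  refine ⟨s, hs, (hf s hs).nonneg_of_left_le (csSup_mem_closure hOne hObdd) ?_, hnonneg⟩
  intro y hy
  have hfs := hnonneg s (left_mem_Icc.mpr hs.2)
  refine ⟨(le_csSup hObdd hy).lt_of_ne ?_, hy.2.le.trans hfs⟩
  rintro rfl
  exact (hy.2.trans_le hfs).false

lemma forall_lt_of_deriv_neg {f f' : ℝ → ℝ} {T V : ℝ}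
    (hf : ∀ t ∈ Ico 0 T, HasDerivAt f (f' t) t) (hneg : ∀ t ∈ Ico 0 T, V ≤ f t → f' t < 0)
    (h0 : f 0 < V) : ∀ t ∈ Ico 0 T, f t < V := by
  intro t ht
  by_contra! hVt
  obtain ⟨s, hs, hVs, hf's⟩ := exists_ge_and_deriv_nonneg ht.1
    (fun u hu => hf u (Icc_subset_Ico_right ht.2 hu)) h0 hVt
  exact (hneg s ⟨hs.1.le, hs.2.trans_lt ht.2⟩ hVs).not_ge hf's

noncomputable def energy (F c₁ x v : ℝ) : ℝ := v ^ 2 / 2 + F * x + c₁ / (2 * x ^ 2)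

section Energy

variable {F c₁ : ℝ}

lemma mul_le_energy (hc₁ : 0 ≤ c₁) (x v : ℝ) : F * x ≤ energy F c₁ x v := by
  unfold energy
  have : 0 ≤ c₁ / (2 * x ^ 2) := by positivity
  nlinarith [sq_nonneg v]

lemma energy_le_energy_right {x v w : ℝ} (hv : 0 ≤ v) (hvw : v ≤ w) :
    energy F c₁ x v ≤ energy F c₁ x w := by
  unfold energy
  gcongr

lemma hasDerivAt_energy {η η' : ℝ → ℝ} {a t : ℝ} (hη : HasDerivAt η (η' t) t)
    (hη' : HasDerivAt η' a t) (hpos : 0 < η t) :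
    HasDerivAt (fun s => energy F c₁ (η s) (η' s)) (η' t * (a + F - c₁ / η t ^ 3)) t := by
  have h := (((hη'.pow 2).div_const 2).add (hη.const_mul F)).add
    ((hasDerivAt_const t c₁).div ((hη.pow 2).const_mul 2) (mul_ne_zero two_ne_zero (pow_ne_zero 2 hpos.ne')))
  simp only [Pi.pow_apply] at h
  refine h.congr_deriv ?_
  field_simp
  ring

lemma antitoneOn_energy {η η' η'' : ℝ → ℝ} {a b : ℝ}
    (hd1 : ∀ t ∈ Icc a b, HasDerivAt η (η' t) t) (hd2 : ∀ t ∈ Icc a b, HasDerivAt η' (η'' t) t)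
    (hpos : ∀ t ∈ Icc a b, 0 < η t) (hv : ∀ t ∈ Icc a b, 0 ≤ η' t)
    (hacc : ∀ t ∈ Icc a b, η'' t ≤ c₁ / η t ^ 3 - F) :
    AntitoneOn (fun t => energy F c₁ (η t) (η' t)) (Icc a b) := by
  have hE : ∀ t ∈ Icc a b, HasDerivAt (fun s => energy F c₁ (η s) (η' s))
      (η' t * (η'' t + F - c₁ / η t ^ 3)) t :=
    fun t ht => hasDerivAt_energy (hd1 t ht) (hd2 t ht) (hpos t ht)
  refine antitoneOn_of_hasDerivWithinAt_nonpos (convex_Icc a b) (HasDerivAt.continuousOn hE)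
    (fun t ht => (hE t (interior_subset ht)).hasDerivWithinAt) fun t ht => ?_
  have ht := interior_subset ht
  exact mul_nonpos_of_nonneg_of_nonpos (hv t ht) (by linarith [hacc t ht])

lemma le_of_le_div_pow_three {D x : ℝ} (hF : 0 < F) (hD : 0 ≤ D) (hD3 : D ^ 3 = c₁ / F)
    (hx : 0 < x) (h : F ≤ c₁ / x ^ 3) : x ≤ D := by
  rw [le_div_iff₀ (by positivity)] at h
  rw [← pow_le_pow_iff_left₀ hx.le hD three_ne_zero, hD3, le_div_iff₀ hF]
  linarith

lemma energy_le_max {T D V t : ℝ} {η η' η'' : ℝ → ℝ} (hF : 0 < F) (hD : 0 ≤ D)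
    (hD3 : D ^ 3 = c₁ / F)
    (hd1 : ∀ t ∈ Ico 0 T, HasDerivAt η (η' t) t) (hd2 : ∀ t ∈ Ico 0 T, HasDerivAt η' (η'' t) t)
    (hpos : ∀ t ∈ Ico 0 T, 0 < η t)
    (hacc : ∀ t ∈ Ico 0 T, 0 ≤ η' t → η'' t ≤ c₁ / η t ^ 3 - F)
    (hvel : ∀ t ∈ Ico 0 T, η' t < V) (ht : t ∈ Ico 0 T) (hv : 0 ≤ η' t) (hDt : D ≤ η t) :
    energy F c₁ (η t) (η' t) ≤ max (energy F c₁ (η 0) (η' 0)) (energy F c₁ D V) := by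
  have hsub : Icc 0 t ⊆ Ico 0 T := Icc_subset_Ico_right ht.2
  have hanti : ∀ {r}, r ∈ Icc 0 t → (∀ u ∈ Icc r t, 0 ≤ η' u) →
      energy F c₁ (η t) (η' t) ≤ energy F c₁ (η r) (η' r) := fun {r} hr hup => by
    have hrt : Icc r t ⊆ Ico 0 T := (Icc_subset_Icc_left hr.1).trans hsub
    exact antitoneOn_energy (fun u hu => hd1 u (hrt hu)) (fun u hu => hd2 u (hrt hu))
      (fun u hu => hpos u (hrt hu)) hup (fun u hu => hacc u (hrt hu) (hup u hu))
      (left_mem_Icc.mpr hr.2) (right_mem_Icc.mpr hr.2) hr.2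
  by_cases hup : ∀ u ∈ Icc 0 t, 0 ≤ η' u
  · exact (hanti (left_mem_Icc.mpr ht.1) hup).trans (le_max_left _ _)
  push Not at hup
  obtain ⟨s, hs, hη''s, hafter⟩ :=
    exists_deriv_nonneg_and_nonneg_after (fun u hu => hd2 u (hsub hu)) hv hup
  have hηs : η s ≤ D := le_of_le_div_pow_three hF hD hD3 (hpos s (hsub hs))
    (by linarith [hacc s (hsub hs) (hafter s (left_mem_Icc.mpr hs.2))])
  obtain ⟨r, hr, hηr⟩ := intermediate_value_Icc hs.2
    (HasDerivAt.continuousOn fun u hu => hd1 u (hsub ⟨hs.1.trans hu.1, hu.2⟩)) ⟨hηs, hDt⟩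
  calc energy F c₁ (η t) (η' t)
      ≤ energy F c₁ (η r) (η' r) :=
        hanti ⟨hs.1.trans hr.1, hr.2⟩ fun u hu => hafter u ⟨hr.1.trans hu.1, hu.2⟩
    _ ≤ energy F c₁ D V := hηr ▸ energy_le_energy_right (hafter r hr)
        (hvel r (hsub ⟨hs.1.trans hr.1, hr.2⟩)).le
    _ ≤ _ := le_max_right _ _

end Energy

theorem stmt10_general
    (T F c₁ V₁ η₀ η₁ V₂ D₁ D₂ : ℝ)
    (hF : 0 < F) (hc₁ : 0 < c₁) (hη₀ : 0 < η₀)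
    (G : ℝ → ℝ → ℝ)
    (hGa : ∀ β γ : ℝ, 0 < β → 0 ≤ γ → G β γ ≤ c₁ / β ^ 3 - F)
    (hGb : ∀ β γ : ℝ, 0 < β → V₁ ≤ γ → G β γ = -F)
    (η η' η'' : ℝ → ℝ)
    (hd1 : ∀ t ∈ Ico 0 T, HasDerivAt η (η' t) t)
    (hd2 : ∀ t ∈ Ico 0 T, HasDerivAt η' (η'' t) t)
    (hpos : ∀ t ∈ Ico 0 T, 0 < η t)
    (hode : ∀ t ∈ Ico 0 T, η'' t = G (η t) (η' t))
    (hinit : η 0 = η₀) (hinit' : η' 0 = η₁)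
    (hV₂ : V₂ = max (η₁ + 1) V₁)
    (hD₁ : D₁ = (c₁ / F) ^ ((1 : ℝ) / 3))
    (hD₂ : D₂ = 2 * max (max η₀ D₁)
      (max ((η₁ ^ 2 / 2 + F * η₀ + c₁ / (2 * η₀ ^ 2)) / F)
           ((V₂ ^ 2 / 2 + F * D₁ + c₁ / (2 * D₁ ^ 2)) / F))) :
    ∀ t ∈ Ico 0 T, η t < D₂ := by
  have hD₁3 : D₁ ^ 3 = c₁ / F := by
    rw [hD₁, one_div]
    exact_mod_cast Real.rpow_inv_natCast_pow (div_pos hc₁ hF).le three_ne_zero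
  have hD₁0 : 0 ≤ D₁ := hD₁ ▸ Real.rpow_nonneg (div_pos hc₁ hF).le _
  have hvel : ∀ t ∈ Ico 0 T, η' t < V₂ := by
    refine forall_lt_of_deriv_neg hd2 (fun t ht hVt => ?_) (by rw [hinit', hV₂]; simp)
    rw [hode t ht, hGb _ _ (hpos t ht) (hVt.trans' (hV₂ ▸ le_max_right _ _))]
    linarith
  have hacc : ∀ t ∈ Ico 0 T, 0 ≤ η' t → η'' t ≤ c₁ / η t ^ 3 - F :=
    fun t ht hv => hode t ht ▸ hGa _ _ (hpos t ht) hv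
  set M := max (max η₀ D₁) (max ((η₁ ^ 2 / 2 + F * η₀ + c₁ / (2 * η₀ ^ 2)) / F)
    ((V₂ ^ 2 / 2 + F * D₁ + c₁ / (2 * D₁ ^ 2)) / F))
  have hη₀M : η₀ ≤ M := by simp [M]
  have hD₁M : D₁ ≤ M := by simp [M]
  have hEM : max (energy F c₁ η₀ η₁) (energy F c₁ D₁ V₂) ≤ F * M := by
    rw [← div_le_iff₀' hF, ← max_div_div_right hF.le]
    exact le_max_right _ _
  intro t ht
  by_contra! hD₂t
  obtain ⟨t₀, ht₀, hηt₀, hη't₀⟩ := exists_ge_and_deriv_nonneg ht.1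
    (fun u hu => hd1 u (Icc_subset_Ico_right ht.2 hu)) (by linarith) hD₂t
  have ht₀T : t₀ ∈ Ico 0 T := ⟨ht₀.1.le, ht₀.2.trans_lt ht.2⟩
  have hE := energy_le_max hF hD₁0 hD₁3 hd1 hd2 hpos hacc hvel ht₀T hη't₀ (by linarith)
  rw [hinit, hinit'] at hE
  nlinarith [mul_le_energy (F := F) hc₁.le (η t₀) (η' t₀)]

theorem stmt10
    (T F c₁ V₁ η₀ η₁ V₂ D₁ D₂ : ℝ)
    (hT : 0 < T) (hF : 0 < F) (hc₁ : 0 < c₁) (hV₁ : 0 ≤ V₁) (hη₀ : 0 < η₀)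
    (G : ℝ → ℝ → ℝ)
    (hGa : ∀ β γ : ℝ, 0 < β → 0 ≤ γ → G β γ ≤ c₁ / β ^ 3 - F)
    (hGb : ∀ β γ : ℝ, 0 < β → V₁ ≤ γ → G β γ = -F)
    (hGc : ∀ β γ : ℝ, 0 < β → -F ≤ G β γ)
    (η η' η'' : ℝ → ℝ)
    (hd1 : ∀ t ∈ Ico 0 T, HasDerivAt η (η' t) t)
    (hd2 : ∀ t ∈ Ico 0 T, HasDerivAt η' (η'' t) t)
    (hpos : ∀ t ∈ Ico 0 T, 0 < η t)
    (hode : ∀ t ∈ Ico 0 T, η'' t = G (η t) (η' t))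
    (hinit : η 0 = η₀) (hinit' : η' 0 = η₁)
    (hV₂ : V₂ = max (η₁ + 1) V₁)
    (hD₁ : D₁ = (c₁ / F) ^ ((1 : ℝ) / 3))
    (hD₂ : D₂ = 2 * max (max η₀ D₁)
      (max ((η₁ ^ 2 / 2 + F * η₀ + c₁ / (2 * η₀ ^ 2)) / F)
           ((V₂ ^ 2 / 2 + F * D₁ + c₁ / (2 * D₁ ^ 2)) / F))) :
    ∀ t ∈ Ico 0 T, η t < D₂ :=
  stmt10_general T F c₁ V₁ η₀ η₁ V₂ D₁ D₂ hF hc₁ hη₀ G hGa hGb η η' η'' hd1 hd2 hpos hode hinit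
    hinit' hV₂ hD₁ hD₂
end

section
/- Under the hypotheses of the previous position bound (G ≥ −F, η'' = G(η,η'), and the upper bound η(t) < D₂ on [0,T)), set V₃ = max{1 − η₁, 2√(2FD₂), 2√(η₁² + 2Fη₀)}. Then η'(t) > −V₃ for all t ∈ [0,T). -/
/-!
The mechanical energy `E = ½ (η')² + F η` satisfies `E' = η' (η'' + F) = η' (G + F)`, and
`G + F ≥ 0`, so `E` does not increase while `η' ≤ 0`. Given a time `t` with `η'(t) ≤ 0`, go back
to the last time `c ≤ t` at which `η'` was nonnegative: either `η' ≤ 0` on all of `[0, t]` and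
`E(t) ≤ E(0) = ½ η₁² + F η₀`, or `η'(c) = 0` and `E(t) ≤ E(c) = F η(c) < F D₂`. Since `F η(t) > 0`,
in both cases `(η'(t))² < V₃²`.
-/

open Set

lemma exists_eq_left_or_eq_zero_and_nonpos_of_continuousOn {f : ℝ → ℝ} {a b : ℝ}
    (hab : a ≤ b) (hf : ContinuousOn f (Icc a b)) (hb : f b ≤ 0) :
    ∃ c ∈ Icc a b, (c = a ∨ f c = 0) ∧ ∀ s ∈ Icc c b, f s ≤ 0 := by
  by_cases hall : ∀ s ∈ Icc a b, f s ≤ 0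
  · exact ⟨a, left_mem_Icc.mpr hab, Or.inl rfl, hall⟩
  push Not at hall
  obtain ⟨s₀, hs₀, hfs₀⟩ := hall
  set S := Icc a b ∩ f ⁻¹' Ici 0
  have hS : IsCompact S :=
    isCompact_Icc.of_isClosed_subset (hf.preimage_isClosed_of_isClosed isClosed_Icc isClosed_Ici)
      inter_subset_left
  obtain ⟨c, ⟨hc, hfc⟩, hcmax⟩ := hS.exists_isGreatest ⟨s₀, hs₀, hfs₀.le⟩
  have hafter : ∀ s ∈ Ioc c b, f s < 0 := fun s hs =>
    not_le.mp fun h => hs.1.not_ge (hcmax ⟨⟨hc.1.trans hs.1.le, hs.2⟩, h⟩)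
  -- a zero of `f` in `[c, b]` lies in `S`, so it can only be `c` itself
  obtain ⟨d, hd, hfd⟩ := intermediate_value_Icc' hc.2 (hf.mono (Icc_subset_Icc_left hc.1))
    ⟨hb, hfc⟩
  have hdc : d = c := le_antisymm (hcmax ⟨⟨hc.1.trans hd.1, hd.2⟩, hfd.ge⟩) hd.1
  refine ⟨c, hc, Or.inr (hdc ▸ hfd), fun s hs => ?_⟩
  rcases hs.1.eq_or_lt with rfl | hcs
  · rw [← hdc, hfd]
  · exact (hafter s ⟨hcs, hs.2⟩).le

lemma antitoneOn_energy_of_deriv_nonpos {x x' x'' : ℝ → ℝ} {F a b : ℝ}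
    (hx : ∀ s ∈ Icc a b, HasDerivAt x (x' s) s) (hx' : ∀ s ∈ Icc a b, HasDerivAt x' (x'' s) s)
    (hacc : ∀ s ∈ Icc a b, -F ≤ x'' s) (hvel : ∀ s ∈ Icc a b, x' s ≤ 0) :
    AntitoneOn (fun s => x' s ^ 2 / 2 + F * x s) (Icc a b) := by
  have hE : ∀ s ∈ Icc a b,
      HasDerivAt (fun s => x' s ^ 2 / 2 + F * x s) (x' s * (x'' s + F)) s := fun s hs =>
    ((((hx' s hs).pow 2).div_const 2).add ((hx s hs).const_mul F)).congr_deriv (by ring)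
  refine antitoneOn_of_hasDerivWithinAt_nonpos (convex_Icc a b)
    (HasDerivAt.continuousOn hE) (fun s hs => (hE s (interior_subset hs)).hasDerivWithinAt)
    fun s hs => ?_
  have hs := interior_subset hs
  exact mul_nonpos_of_nonpos_of_nonneg (hvel s hs) (by linarith [hacc s hs])

lemma four_mul_le_sq_of_two_mul_sqrt_le {x V : ℝ} (h : 2 * Real.sqrt x ≤ V) : 4 * x ≤ V ^ 2 := by
  have hsqrt := Real.sqrt_nonneg x
  rcases le_total 0 x with hx | hx
  · nlinarith [Real.sq_sqrt hx]
  · nlinarith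

theorem stmt11_general
    (T F η₀ η₁ D₂ V₃ : ℝ)
    (hF : 0 < F)
    (G : ℝ → ℝ → ℝ)
    (hGc : ∀ β γ : ℝ, 0 < β → -F ≤ G β γ)
    (η η' η'' : ℝ → ℝ)
    (hd1 : ∀ t ∈ Ico 0 T, HasDerivAt η (η' t) t)
    (hd2 : ∀ t ∈ Ico 0 T, HasDerivAt η' (η'' t) t)
    (hpos : ∀ t ∈ Ico 0 T, 0 < η t)
    (hode : ∀ t ∈ Ico 0 T, η'' t = G (η t) (η' t))
    (hinit : η 0 = η₀) (hinit' : η' 0 = η₁)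
    (hbound : ∀ t ∈ Ico 0 T, η t < D₂)
    (hV₃ : V₃ = max (max (1 - η₁) (2 * Real.sqrt (2 * F * D₂)))
                    (2 * Real.sqrt (η₁ ^ 2 + 2 * F * η₀))) :
    ∀ t ∈ Ico 0 T, -V₃ < η' t := by
  have hV₃D : 4 * (2 * F * D₂) ≤ V₃ ^ 2 :=
    four_mul_le_sq_of_two_mul_sqrt_le (hV₃ ▸ le_max_of_le_left (le_max_right _ _))
  have hV₃η : 4 * (η₁ ^ 2 + 2 * F * η₀) ≤ V₃ ^ 2 :=
    four_mul_le_sq_of_two_mul_sqrt_le (hV₃ ▸ le_max_right _ _)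
  have hV₃nonneg : 0 ≤ V₃ := hV₃ ▸ le_max_of_le_right (by positivity)
  intro t ht
  rcases lt_or_ge 0 (η' t) with hup | hdown
  · linarith
  have hsub : Icc 0 t ⊆ Ico 0 T := fun s hs => ⟨hs.1, hs.2.trans_lt ht.2⟩
  obtain ⟨c, hc, hcstart, hnonpos⟩ := exists_eq_left_or_eq_zero_and_nonpos_of_continuousOn ht.1
    (HasDerivAt.continuousOn fun s hs => hd2 s (hsub hs)) hdown
  have hsub' : Icc c t ⊆ Ico 0 T := (Icc_subset_Icc_left hc.1).trans hsub
  have henergy : η' t ^ 2 / 2 + F * η t ≤ η' c ^ 2 / 2 + F * η c :=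
    antitoneOn_energy_of_deriv_nonpos (fun s hs => hd1 s (hsub' hs)) (fun s hs => hd2 s (hsub' hs))
      (fun s hs => hode s (hsub' hs) ▸ hGc _ _ (hpos s (hsub' hs))) hnonpos
      (left_mem_Icc.mpr hc.2) (right_mem_Icc.mpr hc.2) hc.2
  have hEc : η' c ^ 2 / 2 + F * η c ≤ V₃ ^ 2 / 8 := by
    rcases hcstart with rfl | hzero
    · rw [hinit, hinit']; linarith
    · rw [hzero]; nlinarith [hbound c (hsub hc)]
  have hsq : η' t ^ 2 < V₃ ^ 2 := by nlinarith [hpos t ht]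
  exact neg_lt_of_abs_lt (abs_lt_of_sq_lt_sq hsq hV₃nonneg)

theorem stmt11
    (T F η₀ η₁ D₂ V₃ : ℝ)
    (hT : 0 < T) (hF : 0 < F) (hη₀ : 0 < η₀) (hD₂ : 0 < D₂)
    (G : ℝ → ℝ → ℝ)
    (hGc : ∀ β γ : ℝ, 0 < β → -F ≤ G β γ)
    (η η' η'' : ℝ → ℝ)
    (hd1 : ∀ t ∈ Ico 0 T, HasDerivAt η (η' t) t)
    (hd2 : ∀ t ∈ Ico 0 T, HasDerivAt η' (η'' t) t)
    (hpos : ∀ t ∈ Ico 0 T, 0 < η t)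
    (hode : ∀ t ∈ Ico 0 T, η'' t = G (η t) (η' t))
    (hinit : η 0 = η₀) (hinit' : η' 0 = η₁)
    (hbound : ∀ t ∈ Ico 0 T, η t < D₂)
    (hV₃ : V₃ = max (max (1 - η₁) (2 * Real.sqrt (2 * F * D₂)))
                    (2 * Real.sqrt (η₁ ^ 2 + 2 * F * η₀))) :
    ∀ t ∈ Ico 0 T, -V₃ < η' t :=
  stmt11_general T F η₀ η₁ D₂ V₃ hF G hGc η η' η'' hd1 hd2 hpos hode hinit hinit' hbound hV₃
end

section
/- Let C, F > 0 and let η ∈ C²([0,T)), η > 0, satisfy η'' = −C η'/η³ − F on [0,T) with η(0) = η₀ > 0, η'(0) = η₁ ≤ 0, and η' < 0 on (0,T). Then for all t ∈ (0,T): (a) −√(η₁² + 2Fη₀) ≤ η'(t) < 0, and (b) η₀ [C / (C + 2η₀² F t − 2η₀² η₁)]^{1/2} ≤ η(t) ≤ η₀. -/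
/-!
Multiplying the equation by `η'` shows that the energy `η'² / 2 + F η` has derivative
`-C η'² / η³ ≤ 0`, which bounds `η'²` by its initial value `η₁² + 2 F η₀`. The equation is also
exact: `η'' + C η' / η³ + F` is the derivative of `η' - C / (2 η²) + F t`, so integrating once gives
`η'(t) - C / (2 η(t)²) + F t = η₁ - C / (2 η₀²)`, and `η'(t) < 0` turns this into the lower bound
for `η(t)`. The upper bound `η(t) ≤ η₀` is the monotonicity of `η`.
-/

open Set

theorem antitoneOn_Ico_of_hasDerivAt_nonpos {a b : ℝ} {f f' : ℝ → ℝ}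
    (hf : ∀ x ∈ Ico a b, HasDerivAt f (f' x) x) (hf' : ∀ x ∈ Ioo a b, f' x ≤ 0) :
    AntitoneOn f (Ico a b) :=
  antitoneOn_of_hasDerivWithinAt_nonpos (convex_Ico a b)
    (fun x hx => (hf x hx).continuousAt.continuousWithinAt)
    (fun x hx => (hf x (interior_subset hx)).hasDerivWithinAt)
    (fun x hx => hf' x (interior_Ico (a := a) ▸ hx))

theorem eq_of_hasDerivAt_zero_Ico {a b : ℝ} {f : ℝ → ℝ}
    (hf : ∀ x ∈ Ico a b, HasDerivAt f 0 x) : ∀ x ∈ Ico a b, f x = f a := fun x hx =>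
  constant_of_has_deriv_right_zero (b := x)
    (fun y hy => (hf y ⟨hy.1, hy.2.trans_lt hx.2⟩).continuousAt.continuousWithinAt)
    (fun y hy => (hf y ⟨hy.1, hy.2.trans hx.2⟩).hasDerivWithinAt) x ⟨hx.1, le_rfl⟩

section FlatSlider

variable {C F : ℝ} {η η' η'' : ℝ → ℝ}

theorem hasDerivAt_energy_s15 {x : ℝ} (h1 : HasDerivAt η (η' x) x) (h2 : HasDerivAt η' (η'' x) x)
    (hode : η'' x = -C * η' x / η x ^ 3 - F) :
    HasDerivAt (fun t => η' t ^ 2 / 2 + F * η t) (-C * η' x ^ 2 / η x ^ 3) x := by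
  refine (((h2.pow 2).div_const 2).add (h1.const_mul F)).congr_deriv ?_
  rw [hode]
  ring

theorem hasDerivAt_firstIntegral {x : ℝ} (h1 : HasDerivAt η (η' x) x)
    (h2 : HasDerivAt η' (η'' x) x) (hode : η'' x = -C * η' x / η x ^ 3 - F) (hx : η x ≠ 0) :
    HasDerivAt (fun t => η' t - C / (2 * η t ^ 2) + F * t) 0 x := by
  have hx2 : 2 * η x ^ 2 ≠ 0 := mul_ne_zero two_ne_zero (pow_ne_zero 2 hx)
  refine ((h2.sub ((hasDerivAt_const x C).div ((h1.pow 2).const_mul 2) hx2)).add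
    ((hasDerivAt_id x).const_mul F)).congr_deriv ?_
  rw [hode, Pi.pow_apply]
  field_simp
  ring

variable {a b : ℝ} (hd1 : ∀ t ∈ Ico a b, HasDerivAt η (η' t) t)
  (hd2 : ∀ t ∈ Ico a b, HasDerivAt η' (η'' t) t) (hpos : ∀ t ∈ Ico a b, 0 < η t)
  (hode : ∀ t ∈ Ico a b, η'' t = -C * η' t / η t ^ 3 - F)
include hd1 hd2 hpos hode

theorem energy_antitoneOn (hC : 0 ≤ C) :
    AntitoneOn (fun t => η' t ^ 2 / 2 + F * η t) (Ico a b) := by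
  refine antitoneOn_Ico_of_hasDerivAt_nonpos
    (fun t ht => hasDerivAt_energy_s15 (hd1 t ht) (hd2 t ht) (hode t ht)) fun t ht => ?_
  have := hpos t (Ioo_subset_Ico_self ht)
  rw [neg_mul, neg_div, neg_nonpos]
  positivity

theorem firstIntegral_eq :
    ∀ t ∈ Ico a b, η' t - C / (2 * η t ^ 2) + F * t = η' a - C / (2 * η a ^ 2) + F * a :=
  eq_of_hasDerivAt_zero_Ico fun t ht =>
    hasDerivAt_firstIntegral (hd1 t ht) (hd2 t ht) (hode t ht) (hpos t ht).ne'

end FlatSlider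

theorem mul_sqrt_le_of_firstIntegral {C F η₀ η₁ t y v : ℝ} (hC : 0 ≤ C) (hη₀ : 0 < η₀) (hy : 0 < y)
    (hv : v < 0) (h : v - C / (2 * y ^ 2) + F * t = η₁ - C / (2 * η₀ ^ 2)) :
    η₀ * √(C / (C + 2 * η₀ ^ 2 * F * t - 2 * η₀ ^ 2 * η₁)) ≤ y := by
  have hw : C ≤ C - 2 * v * y ^ 2 := by nlinarith [mul_pos hy hy]
  have hw₀ : 0 ≤ C - 2 * v * y ^ 2 := hC.trans hw
  have hD : C + 2 * η₀ ^ 2 * F * t - 2 * η₀ ^ 2 * η₁ = η₀ ^ 2 * (C - 2 * v * y ^ 2) / y ^ 2 := by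
    rw [mul_assoc _ F t, show F * t = η₁ - C / (2 * η₀ ^ 2) - v + C / (2 * y ^ 2) by linarith]
    field_simp
    ring
  have hCD : η₀ ^ 2 * (C / (η₀ ^ 2 * (C - 2 * v * y ^ 2) / y ^ 2)) =
      y ^ 2 * (C / (C - 2 * v * y ^ 2)) := by
    field_simp
  refine le_of_pow_le_pow_left₀ two_ne_zero hy.le ?_
  rw [hD, mul_pow, Real.sq_sqrt (by positivity), hCD]
  exact mul_le_of_le_one_right (sq_nonneg y) (div_le_one_of_le₀ hw hw₀)

theorem stmt15_general
    (T C F η₀ η₁ : ℝ) (hC : 0 < C) (hF : 0 < F)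
    (hη₀ : 0 < η₀)
    (η η' η'' : ℝ → ℝ)
    (hd1 : ∀ t ∈ Ico 0 T, HasDerivAt η (η' t) t)
    (hd2 : ∀ t ∈ Ico 0 T, HasDerivAt η' (η'' t) t)
    (hpos : ∀ t ∈ Ico 0 T, 0 < η t)
    (hode : ∀ t ∈ Ico 0 T, η'' t = -C * η' t / (η t) ^ 3 - F)
    (hinit : η 0 = η₀) (hinit' : η' 0 = η₁)
    (hneg : ∀ t ∈ Ioo 0 T, η' t < 0) :
    ∀ t ∈ Ioo 0 T,
      (-Real.sqrt (η₁ ^ 2 + 2 * F * η₀) ≤ η' t ∧ η' t < 0) ∧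
      (η₀ * Real.sqrt (C / (C + 2 * η₀ ^ 2 * F * t - 2 * η₀ ^ 2 * η₁)) ≤ η t ∧
        η t ≤ η₀) := by
  intro t ht
  have ht' : t ∈ Ico 0 T := Ioo_subset_Ico_self ht
  have h0 : (0 : ℝ) ∈ Ico 0 T := ⟨le_rfl, ht.1.trans ht.2⟩
  have henergy := energy_antitoneOn hd1 hd2 hpos hode hC.le h0 ht' ht.1.le
  have hfirst := firstIntegral_eq hd1 hd2 hpos hode t ht'
  have hdecr := antitoneOn_Ico_of_hasDerivAt_nonpos hd1 (fun s hs => (hneg s hs).le) h0 ht' ht.1.le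
  simp only [hinit, hinit', mul_zero, add_zero] at henergy hfirst hdecr
  refine ⟨⟨Real.neg_sqrt_le_of_sq_le ?_, hneg t ht⟩,
    mul_sqrt_le_of_firstIntegral hC.le hη₀ (hpos t ht') (hneg t ht) hfirst, hdecr⟩
  nlinarith [mul_pos hF (hpos t ht')]

theorem stmt15
    (T C F η₀ η₁ : ℝ) (hT : 0 < T) (hC : 0 < C) (hF : 0 < F)
    (hη₀ : 0 < η₀) (hη₁ : η₁ ≤ 0)
    (η η' η'' : ℝ → ℝ)
    (hd1 : ∀ t ∈ Ico 0 T, HasDerivAt η (η' t) t)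
    (hd2 : ∀ t ∈ Ico 0 T, HasDerivAt η' (η'' t) t)
    (hpos : ∀ t ∈ Ico 0 T, 0 < η t)
    (hode : ∀ t ∈ Ico 0 T, η'' t = -C * η' t / (η t) ^ 3 - F)
    (hinit : η 0 = η₀) (hinit' : η' 0 = η₁)
    (hneg : ∀ t ∈ Ioo 0 T, η' t < 0) :
    ∀ t ∈ Ioo 0 T,
      (-Real.sqrt (η₁ ^ 2 + 2 * F * η₀) ≤ η' t ∧ η' t < 0) ∧
      (η₀ * Real.sqrt (C / (C + 2 * η₀ ^ 2 * F * t - 2 * η₀ ^ 2 * η₁)) ≤ η t ∧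
        η t ≤ η₀) :=
  stmt15_general T C F η₀ η₁ hC hF hη₀ η η' η'' hd1 hd2 hpos hode hinit hinit' hneg
end
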